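/- arXiv:2307.09149 — 4 statements merged into one kernel-verified Lean document; each statement's English description precedes it below -/
import Mathlib

section
/- Let H be an N×N Hermitian complex matrix, D an N×N Hermitian positive semidefinite complex matrix, γ > 0 and L ∈ ℝ such that L·I − H is positive semidefinite. Set W = γH + D, fix b ∈ ℂ^N, and define φ(μ) = μᴴWμ − 2·Re(μᴴb). Then for all μ, μ₀ ∈ ℂ^N, φ(μ) ≤ φ(μ₀) + 2·Re{(μ−μ₀)ᴴ(Wμ₀ − b)} + γL‖μ−μ₀‖² + (μ−μ₀)ᴴD(μ−μ₀), with equality when μ = μ₀. -/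
open Matrix
open scoped ComplexOrder

/-!
For Hermitian `W` the quadratic `φ` has the exact expansion
`φ(μ₀ + d) = φ(μ₀) + 2·Re dᴴ(Wμ₀ − b) + Re dᴴWd`. With `W = γH + D` the remainder is
`γ·Re dᴴHd + Re dᴴDd`, and `L·I − H ⪰ 0` says precisely that `Re dᴴHd ≤ L‖d‖²`.
-/

section

variable {𝕜 n : Type*} [RCLike 𝕜] [Fintype n]

open RCLike

theorem Matrix.re_star_dotProduct_self (v : n → 𝕜) :
    re (star v ⬝ᵥ v) = ∑ i, ‖v i‖ ^ 2 := by
  simp only [dotProduct, Pi.star_apply, star_def, RCLike.conj_mul, map_sum]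
  norm_cast

theorem Matrix.IsHermitian.re_star_dotProduct_mulVec_comm {W : Matrix n n 𝕜}
    (hW : W.IsHermitian) (x y : n → 𝕜) :
    re (star x ⬝ᵥ W *ᵥ y) = re (star y ⬝ᵥ W *ᵥ x) := by
  rw [← conj_re, ← star_def, star_dotProduct, star_star, star_mulVec, hW.eq, dotProduct_mulVec]

theorem Matrix.IsHermitian.re_star_dotProduct_mulVec_add {W : Matrix n n 𝕜}
    (hW : W.IsHermitian) (x d : n → 𝕜) :
    re (star (x + d) ⬝ᵥ W *ᵥ (x + d)) =
      re (star x ⬝ᵥ W *ᵥ x) + 2 * re (star d ⬝ᵥ W *ᵥ x) + re (star d ⬝ᵥ W *ᵥ d) := by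
  simp only [star_add, add_dotProduct, mulVec_add, dotProduct_add, map_add,
    hW.re_star_dotProduct_mulVec_comm x d]
  ring

theorem Matrix.PosSemidef.re_star_dotProduct_mulVec_le [DecidableEq n] {H : Matrix n n 𝕜}
    {L : ℝ} (hL : ((L : 𝕜) • (1 : Matrix n n 𝕜) - H).PosSemidef) (v : n → 𝕜) :
    re (star v ⬝ᵥ H *ᵥ v) ≤ L * ∑ i, ‖v i‖ ^ 2 := by
  have h := hL.re_dotProduct_nonneg v
  rw [sub_mulVec, smul_mulVec, one_mulVec, dotProduct_sub, dotProduct_smul, map_sub, smul_eq_mul,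
    re_ofReal_mul, re_star_dotProduct_self] at h
  linarith

def quadObjective (W : Matrix n n 𝕜) (b μ : n → 𝕜) : ℝ :=
  re (star μ ⬝ᵥ W *ᵥ μ) - 2 * re (star μ ⬝ᵥ b)

theorem quadObjective_add {W : Matrix n n 𝕜} (hW : W.IsHermitian) (b x d : n → 𝕜) :
    quadObjective W b (x + d) =
      quadObjective W b x + 2 * re (star d ⬝ᵥ (W *ᵥ x - b)) + re (star d ⬝ᵥ W *ᵥ d) := by
  rw [quadObjective, quadObjective, hW.re_star_dotProduct_mulVec_add]
  simp only [star_add, add_dotProduct, dotProduct_sub, map_add, map_sub]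
  ring

theorem quadObjective_le_surrogate [DecidableEq n] {H D : Matrix n n 𝕜} (hH : H.IsHermitian)
    (hD : D.PosSemidef) {γ L : ℝ} (hγ : 0 ≤ γ)
    (hL : ((L : 𝕜) • (1 : Matrix n n 𝕜) - H).PosSemidef) (b x d : n → 𝕜) :
    quadObjective ((γ : 𝕜) • H + D) b (x + d) ≤
      quadObjective ((γ : 𝕜) • H + D) b x + 2 * re (star d ⬝ᵥ (((γ : 𝕜) • H + D) *ᵥ x - b))
        + γ * L * ∑ i, ‖d i‖ ^ 2 + re (star d ⬝ᵥ D *ᵥ d) := by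
  have hW : ((γ : 𝕜) • H + D).IsHermitian :=
    (hH.smul (conj_ofReal γ)).add hD.isHermitian
  have hsplit : re (star d ⬝ᵥ ((γ : 𝕜) • H + D) *ᵥ d) =
      γ * re (star d ⬝ᵥ H *ᵥ d) + re (star d ⬝ᵥ D *ᵥ d) := by
    rw [add_mulVec, smul_mulVec, dotProduct_add, dotProduct_smul, map_add, smul_eq_mul,
      re_ofReal_mul]
  rw [quadObjective_add hW, hsplit]
  nlinarith [mul_le_mul_of_nonneg_left (hL.re_star_dotProduct_mulVec_le d) hγ]

end

/-- **MM surrogate majorization.** With `H` Hermitian, `D` Hermitian PSD, `γ > 0`,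
`L·I − H ⪰ 0` and `W = γH + D`, the quadratic `φ(μ) = μᴴWμ − 2·Re(μᴴb)` satisfies
`φ(μ) ≤ φ(μ₀) + 2·Re{(μ−μ₀)ᴴ(Wμ₀ − b)} + γL‖μ−μ₀‖² + (μ−μ₀)ᴴD(μ−μ₀)`,
with equality when `μ = μ₀`. -/
theorem stmt2 {N : ℕ} (H D : Matrix (Fin N) (Fin N) ℂ) (hH : H.IsHermitian)
    (hD : D.PosSemidef) (γ L : ℝ) (hγ : 0 < γ)
    (hL : ((L : ℂ) • (1 : Matrix (Fin N) (Fin N) ℂ) - H).PosSemidef)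
    (b : Fin N → ℂ) :
    ∀ φ : (Fin N → ℂ) → ℝ,
      (∀ μ, φ μ = (star μ ⬝ᵥ (((γ : ℂ) • H + D) *ᵥ μ)).re - 2 * (star μ ⬝ᵥ b).re) →
      ∀ μ μ₀ : Fin N → ℂ,
        (φ μ ≤ φ μ₀ + 2 * (star (μ - μ₀) ⬝ᵥ (((γ : ℂ) • H + D) *ᵥ μ₀ - b)).re
            + γ * L * (∑ i, ‖μ i - μ₀ i‖ ^ 2)
            + (star (μ - μ₀) ⬝ᵥ (D *ᵥ (μ - μ₀))).re) ∧
        (μ = μ₀ →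
          φ μ = φ μ₀ + 2 * (star (μ - μ₀) ⬝ᵥ (((γ : ℂ) • H + D) *ᵥ μ₀ - b)).re
            + γ * L * (∑ i, ‖μ i - μ₀ i‖ ^ 2)
            + (star (μ - μ₀) ⬝ᵥ (D *ᵥ (μ - μ₀))).re) := by
  intro φ hφ μ μ₀
  obtain rfl : φ = quadObjective ((γ : ℂ) • H + D) b := funext hφ
  obtain ⟨d, rfl⟩ : ∃ d, μ = μ₀ + d := ⟨μ - μ₀, by abel⟩
  simp only [Pi.add_apply, add_sub_cancel_left]
  refine ⟨?_, fun h => ?_⟩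
  · exact quadObjective_le_surrogate hH hD hγ.le hL b μ₀ d
  · obtain rfl : d = 0 := add_eq_left.mp h
    simp
end

section
/- Let W be an N×N Hermitian positive definite complex matrix, M an N×N Hermitian complex matrix such that M − W is positive semidefinite, and b ∈ ℂ^N. Then M is invertible, and for every initial point μ₀ ∈ ℂ^N the sequence defined by μ_{t+1} = μ_t − M⁻¹(Wμ_t − b) converges to W⁻¹b, the unique global minimizer of φ(μ) = μᴴWμ − 2·Re(μᴴb). -/
open Matrix Filter
open scoped ComplexOrder Topology

/-!
The error `eₜ = μₜ - W⁻¹b` obeys `eₜ₊₁ = eₜ - dₜ` with `M dₜ = W eₜ`. Writing `‖v‖²_A` for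
`Re (vᴴAv)`, the expansion of `‖eₜ - dₜ‖²_M` together with `‖dₜ‖²_W ≤ ‖dₜ‖²_M` and
`‖eₜ - dₜ‖²_W ≥ 0` gives the descent inequality `‖eₜ₊₁‖²_M + ‖eₜ‖²_W ≤ ‖eₜ‖²_M`.
Telescoping makes `∑ₜ ‖eₜ‖²_W` finite, so `‖eₜ‖²_W → 0`, and `W ≻ 0` is coercive in finite
dimension, so `eₜ → 0`. The minimality of `W⁻¹b` comes from completing the square:
`φ(μ) = φ(W⁻¹b) + ‖μ - W⁻¹b‖²_W`.
-/

lemma tendsto_atTop_zero_of_succ_add_le {a b : ℕ → ℝ} (ha : ∀ t, 0 ≤ a t) (hb : ∀ t, 0 ≤ b t)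
    (h : ∀ t, a (t + 1) + b t ≤ a t) : Tendsto b atTop (𝓝 0) := by
  have telescope : ∀ t, ∑ i ∈ Finset.range t, b i + a t ≤ a 0 := by
    intro t
    induction t with
    | zero => simp
    | succ t ih => rw [Finset.sum_range_succ]; linarith [h t]
  exact (summable_of_sum_range_le hb fun t => by linarith [telescope t, ha t]).tendsto_atTop_zero

namespace Matrix

lemma PosDef.of_posSemidef_sub {n R : Type*} [Ring R] [PartialOrder R] [StarRing R]
    [AddLeftMono R] {W M : Matrix n n R} (hW : W.PosDef) (hMW : (M - W).PosSemidef) :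
    M.PosDef := by
  simpa using hW.add_posSemidef hMW

lemma mulVec_nonsing_inv_mulVec {n α : Type*} [Fintype n] [DecidableEq n] [CommRing α]
    {A : Matrix n n α} (hA : IsUnit A) (x : n → α) : A *ᵥ (A⁻¹ *ᵥ x) = x := by
  rw [mulVec_mulVec, mul_nonsing_inv _ ((isUnit_iff_isUnit_det A).mp hA), one_mulVec]

variable {n 𝕜 : Type*} [Fintype n] [RCLike 𝕜]

open RCLike

lemma IsHermitian.re_dotProduct_mulVec_comm {A : Matrix n n 𝕜} (hA : A.IsHermitian)
    (x y : n → 𝕜) : re (star y ⬝ᵥ (A *ᵥ x)) = re (star x ⬝ᵥ (A *ᵥ y)) := by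
  rw [star_dotProduct, star_mulVec, hA.eq, ← dotProduct_mulVec, ← starRingEnd_apply, conj_re]

lemma IsHermitian.re_dotProduct_mulVec_sub {A : Matrix n n 𝕜} (hA : A.IsHermitian)
    (x y : n → 𝕜) :
    re (star (x - y) ⬝ᵥ (A *ᵥ (x - y))) =
      re (star x ⬝ᵥ (A *ᵥ x)) - 2 * re (star y ⬝ᵥ (A *ᵥ x)) + re (star y ⬝ᵥ (A *ᵥ y)) := by
  have := hA.re_dotProduct_mulVec_comm x y
  simp only [star_sub, mulVec_sub, sub_dotProduct, dotProduct_sub, map_sub] at this ⊢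
  linarith

lemma re_dotProduct_mulVec_ofReal_smul (A : Matrix n n 𝕜) (r : ℝ) (x : n → 𝕜) :
    re (star ((r : 𝕜) • x) ⬝ᵥ (A *ᵥ ((r : 𝕜) • x))) = r ^ 2 * re (star x ⬝ᵥ (A *ᵥ x)) := by
  simp only [star_smul, RCLike.star_def, conj_ofReal, mulVec_smul, smul_dotProduct,
    dotProduct_smul, smul_eq_mul, ← mul_assoc, ← ofReal_mul, re_ofReal_mul, sq]

lemma PosDef.exists_pos_mul_norm_sq_le {A : Matrix n n 𝕜} (hA : A.PosDef) :
    ∃ c > 0, ∀ x, c * ‖x‖ ^ 2 ≤ re (star x ⬝ᵥ (A *ᵥ x)) := by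
  obtain ⟨c, hc, hc_le⟩ := (isCompact_sphere (0 : n → 𝕜) 1).exists_forall_le'
    (Continuous.continuousOn (by fun_prop))
    fun u hu => hA.re_dotProduct_pos (ne_zero_of_mem_unit_sphere ⟨u, hu⟩)
  refine ⟨c, hc, fun x => ?_⟩
  rcases eq_or_ne x 0 with rfl | hx
  · simp
  have hu : (‖x‖⁻¹ : 𝕜) • x ∈ Metric.sphere (0 : n → 𝕜) 1 := by
    simp [norm_smul, hx]
  calc c * ‖x‖ ^ 2
      ≤ ‖x‖ ^ 2 * re (star ((‖x‖⁻¹ : 𝕜) • x) ⬝ᵥ (A *ᵥ ((‖x‖⁻¹ : 𝕜) • x))) := by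
        rw [mul_comm]; exact mul_le_mul_of_nonneg_left (hc_le _ hu) (sq_nonneg _)
    _ = re (star x ⬝ᵥ (A *ᵥ x)) := by
        rw [← ofReal_inv, re_dotProduct_mulVec_ofReal_smul, ← mul_assoc, ← mul_pow,
          mul_inv_cancel₀ (norm_ne_zero_iff.mpr hx), one_pow, one_mul]

lemma PosDef.tendsto_zero_of_tendsto_re_dotProduct_mulVec {ι : Type*} {l : Filter ι}
    {A : Matrix n n 𝕜} (hA : A.PosDef) {x : ι → n → 𝕜}
    (h : Tendsto (fun i => re (star (x i) ⬝ᵥ (A *ᵥ x i))) l (𝓝 0)) : Tendsto x l (𝓝 0) := by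
  obtain ⟨c, hc, hc_le⟩ := hA.exists_pos_mul_norm_sq_le
  refine squeeze_zero_norm (fun i => Real.le_sqrt_of_sq_le ?_)
    (by simpa using (h.div_const c).sqrt)
  rw [le_div_iff₀ hc, mul_comm]
  exact hc_le (x i)

lemma re_dotProduct_mulVec_sub_add_le {W M : Matrix n n 𝕜} (hW : W.PosSemidef)
    (hMW : (M - W).PosSemidef) {e d : n → 𝕜} (hd : M *ᵥ d = W *ᵥ e) :
    re (star (e - d) ⬝ᵥ (M *ᵥ (e - d))) + re (star e ⬝ᵥ (W *ᵥ e)) ≤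
      re (star e ⬝ᵥ (M *ᵥ e)) := by
  have hM : M.IsHermitian := by simpa using hMW.isHermitian.add hW.isHermitian
  have hWd_le_Md : re (star d ⬝ᵥ (W *ᵥ d)) ≤ re (star d ⬝ᵥ (M *ᵥ d)) := by
    have := hMW.re_dotProduct_nonneg d
    simp only [sub_mulVec, dotProduct_sub, map_sub] at this
    linarith
  have hW_sub_nonneg := hW.re_dotProduct_nonneg (e - d)
  rw [hW.isHermitian.re_dotProduct_mulVec_sub] at hW_sub_nonneg
  have hMed : re (star d ⬝ᵥ (M *ᵥ e)) = re (star e ⬝ᵥ (W *ᵥ e)) := by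
    rw [hM.re_dotProduct_mulVec_comm, hd]
  rw [hM.re_dotProduct_mulVec_sub, hMed, hd]
  rw [hd] at hWd_le_Md
  linarith

theorem PosDef.tendsto_inv_mulVec_of_majorizer_iteration [DecidableEq n] {W M : Matrix n n 𝕜}
    (hW : W.PosDef) (hMW : (M - W).PosSemidef) (b : n → 𝕜) {μ : ℕ → n → 𝕜}
    (hμ : ∀ t, μ (t + 1) = μ t - M⁻¹ *ᵥ (W *ᵥ μ t - b)) :
    Tendsto μ atTop (𝓝 (W⁻¹ *ᵥ b)) := by
  have hM := hW.of_posSemidef_sub hMW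
  set e : ℕ → n → 𝕜 := fun t => μ t - W⁻¹ *ᵥ b with he_def
  have he : ∀ t, e (t + 1) = e t - M⁻¹ *ᵥ (W *ᵥ e t) := by
    intro t
    simp only [he_def, hμ t, mulVec_sub, mulVec_nonsing_inv_mulVec hW.isUnit]
    abel
  have hdescent : ∀ t, re (star (e (t + 1)) ⬝ᵥ (M *ᵥ e (t + 1))) +
      re (star (e t) ⬝ᵥ (W *ᵥ e t)) ≤ re (star (e t) ⬝ᵥ (M *ᵥ e t)) := fun t =>
    he t ▸ re_dotProduct_mulVec_sub_add_le hW.posSemidef hMW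
      (mulVec_nonsing_inv_mulVec hM.isUnit _)
  have he_zero : Tendsto e atTop (𝓝 0) :=
    hW.tendsto_zero_of_tendsto_re_dotProduct_mulVec <| tendsto_atTop_zero_of_succ_add_le
      (fun t => hM.posSemidef.re_dotProduct_nonneg _)
      (fun t => hW.posSemidef.re_dotProduct_nonneg _) hdescent
  exact tendsto_sub_nhds_zero_iff.mp he_zero

lemma IsHermitian.re_dotProduct_mulVec_sub_two_mul_eq {W : Matrix n n 𝕜} (hW : W.IsHermitian)
    {x b : n → 𝕜} (hx : W *ᵥ x = b) (μ : n → 𝕜) :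
    re (star μ ⬝ᵥ (W *ᵥ μ)) - 2 * re (star μ ⬝ᵥ b) =
      re (star x ⬝ᵥ (W *ᵥ x)) - 2 * re (star x ⬝ᵥ b) + re (star (μ - x) ⬝ᵥ (W *ᵥ (μ - x))) := by
  rw [hW.re_dotProduct_mulVec_sub, hW.re_dotProduct_mulVec_comm μ x, hx]
  ring

end Matrix

theorem stmt4_general {N : ℕ} (W M : Matrix (Fin N) (Fin N) ℂ) (hW : W.PosDef)
    (hMW : (M - W).PosSemidef) (b : Fin N → ℂ) :
    IsUnit M ∧
    (∀ μ : ℕ → Fin N → ℂ,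
      (∀ t, μ (t + 1) = μ t - M⁻¹ *ᵥ (W *ᵥ μ t - b)) →
      Tendsto μ atTop (𝓝 (W⁻¹ *ᵥ b))) ∧
    (∀ φ : (Fin N → ℂ) → ℝ,
      (∀ μ, φ μ = (star μ ⬝ᵥ (W *ᵥ μ)).re - 2 * (star μ ⬝ᵥ b).re) →
      (∀ μ, φ (W⁻¹ *ᵥ b) ≤ φ μ) ∧
      (∀ μ, φ μ = φ (W⁻¹ *ᵥ b) → μ = W⁻¹ *ᵥ b)) := by
  refine ⟨(hW.of_posSemidef_sub hMW).isUnit,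
    fun μ hμ => hW.tendsto_inv_mulVec_of_majorizer_iteration hMW b hμ, fun φ hφ => ?_⟩
  have complete_square : ∀ μ, φ μ = φ (W⁻¹ *ᵥ b) +
      (star (μ - W⁻¹ *ᵥ b) ⬝ᵥ (W *ᵥ (μ - W⁻¹ *ᵥ b))).re := fun μ => by
    simpa only [hφ, RCLike.re_to_complex] using
      hW.isHermitian.re_dotProduct_mulVec_sub_two_mul_eq (mulVec_nonsing_inv_mulVec hW.isUnit b) μ
  refine ⟨fun μ => ?_, fun μ hμ => ?_⟩
  · rw [complete_square μ]
    exact le_add_of_nonneg_right (hW.posSemidef.re_dotProduct_nonneg _)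
  · by_contra hne
    have := hW.re_dotProduct_pos (sub_ne_zero.mpr hne)
    rw [RCLike.re_to_complex] at this
    linarith [complete_square μ]

/-- **Convergence of the inverse-free MM iteration.** If `W` is Hermitian positive
definite, `M` is Hermitian with `M − W ⪰ 0`, then `M` is invertible and the iteration
`μ_{t+1} = μ_t − M⁻¹(Wμ_t − b)` converges (for any start) to `W⁻¹b`, the unique global
minimizer of `φ(μ) = μᴴWμ − 2·Re(μᴴb)`. -/
theorem stmt4 {N : ℕ} (W M : Matrix (Fin N) (Fin N) ℂ) (hW : W.PosDef)
    (hM : M.IsHermitian) (hMW : (M - W).PosSemidef) (b : Fin N → ℂ) :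
    IsUnit M ∧
    (∀ μ : ℕ → Fin N → ℂ,
      (∀ t, μ (t + 1) = μ t - M⁻¹ *ᵥ (W *ᵥ μ t - b)) →
      Tendsto μ atTop (𝓝 (W⁻¹ *ᵥ b))) ∧
    (∀ φ : (Fin N → ℂ) → ℝ,
      (∀ μ, φ μ = (star μ ⬝ᵥ (W *ᵥ μ)).re - 2 * (star μ ⬝ᵥ b).re) →
      (∀ μ, φ (W⁻¹ *ᵥ b) ≤ φ μ) ∧
      (∀ μ, φ μ = φ (W⁻¹ *ᵥ b) → μ = W⁻¹ *ᵥ b)) :=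
  stmt4_general W M hW hMW b
end

section
/- Let X and Y be nonempty finite sets, let p : X×Y → (0,∞), and let q₂ be a probability mass function on Y. Define g(x) = exp(Σ_{y∈Y} q₂(y)·ln p(x,y)) and q₁*(x) = g(x)/Σ_{x'∈X} g(x'). Then for every probability mass function q₁ on X (with the convention 0·ln 0 = 0), Σ_{x∈X}Σ_{y∈Y} q₁(x)q₂(y)·ln( q₁(x)q₂(y) / p(x,y) ) = Σ_{x∈X} q₁(x)·ln( q₁(x)/q₁*(x) ) + C, where C = Σ_{y∈Y} q₂(y)·ln q₂(y) − ln(Σ_{x'∈X} g(x')) does not depend on q₁. Consequently q₁* is the unique probability mass function minimizing q₁ ↦ Σ_{x,y} q₁(x)q₂(y)·ln(q₁(x)q₂(y)/p(x,y)). -/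
/-!
Writing `G(q₁)` for the left-hand side, `ln(q₁(x)q₂(y)/p(x,y))` splits as
`ln q₁(x) + ln q₂(y) - ln p(x,y)` (terms with a zero factor vanish on both sides);
averaging over `q₂` turns the last term into `ln g(x)`, and `ln g(x) = ln q₁*(x) + ln Z`
with `Z = Σ g`. Hence `G(q₁) = KL(q₁ ‖ q₁*) + C`, and minimality and uniqueness are Gibbs'
inequality: `KL(q ‖ r) = Σ r·klFun(q/r) ≥ 0`, with equality only if `q = r` since `klFun`
vanishes only at `1`.
-/

open Finset Real InformationTheory

section Gibbs

variable {ι : Type*} [Fintype ι] {q r : ι → ℝ}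

lemma sum_mul_log_div_eq_sum_mul_klFun (hr : ∀ i, r i ≠ 0)
    (hsum : ∑ i, q i = ∑ i, r i) :
    ∑ i, q i * log (q i / r i) = ∑ i, r i * klFun (q i / r i) := by
  have hterm : ∀ i, r i * klFun (q i / r i) = q i * log (q i / r i) + (r i - q i) := by
    intro i
    rw [klFun_apply]
    field_simp [hr i]
    ring
  rw [sum_congr rfl fun i _ => hterm i, sum_add_distrib, sum_sub_distrib, hsum, sub_self,
    add_zero]

lemma sum_mul_log_div_nonneg (hq : ∀ i, 0 ≤ q i) (hr : ∀ i, 0 < r i)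
    (hsum : ∑ i, q i = ∑ i, r i) :
    0 ≤ ∑ i, q i * log (q i / r i) := by
  rw [sum_mul_log_div_eq_sum_mul_klFun (fun i => (hr i).ne') hsum]
  exact sum_nonneg fun i _ => mul_nonneg (hr i).le (klFun_nonneg (div_nonneg (hq i) (hr i).le))

lemma sum_mul_log_div_eq_zero_iff (hq : ∀ i, 0 ≤ q i) (hr : ∀ i, 0 < r i)
    (hsum : ∑ i, q i = ∑ i, r i) :
    ∑ i, q i * log (q i / r i) = 0 ↔ q = r := by
  have hratio : ∀ i, 0 ≤ q i / r i := fun i => div_nonneg (hq i) (hr i).le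
  rw [sum_mul_log_div_eq_sum_mul_klFun (fun i => (hr i).ne') hsum,
    sum_eq_zero_iff_of_nonneg fun i _ => mul_nonneg (hr i).le (klFun_nonneg (hratio i))]
  simp only [mem_univ, true_implies, mul_eq_zero, (hr _).ne', false_or,
    klFun_eq_zero_iff (hratio _), div_eq_one_iff_eq (hr _).ne', funext_iff]

end Gibbs

lemma sum_mul_mul_log_mul_div {ι : Type*} [Fintype ι] (a : ℝ) (b c : ι → ℝ)
    (hc : ∀ i, c i ≠ 0) (hb : ∑ i, b i = 1) :
    ∑ i, a * b i * log (a * b i / c i)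
      = a * (log a + ∑ i, b i * log (b i) - ∑ i, b i * log (c i)) := by
  have hterm : ∀ i, a * b i * log (a * b i / c i)
      = a * (b i * log a + b i * log (b i) - b i * log (c i)) := by
    intro i
    rcases eq_or_ne a 0 with rfl | ha
    · simp
    rcases eq_or_ne (b i) 0 with hbi | hbi
    · simp [hbi]
    rw [log_div (mul_ne_zero ha hbi) (hc i), log_mul ha hbi]
    ring
  rw [sum_congr rfl fun i _ => hterm i, ← mul_sum, sum_sub_distrib, sum_add_distrib,
    ← sum_mul, hb, one_mul]

section MeanField

variable {X Y : Type*} [Fintype Y] (p : X × Y → ℝ) (q₂ : Y → ℝ)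

/-- The exponentiated expected log-joint `g(x)`. -/
noncomputable def gibbsWeight (x : X) : ℝ := exp (∑ y, q₂ y * log (p (x, y)))

lemma gibbsWeight_pos (x : X) : 0 < gibbsWeight p q₂ x := exp_pos _

lemma log_gibbsWeight (x : X) :
    log (gibbsWeight p q₂ x) = ∑ y, q₂ y * log (p (x, y)) := log_exp _

variable [Fintype X]

/-- The optimal mean-field factor `q₁*`. -/
noncomputable def meanFieldFactor (x : X) : ℝ :=
  gibbsWeight p q₂ x / ∑ x', gibbsWeight p q₂ x'

noncomputable def freeEnergy (q₁ : X → ℝ) : ℝ :=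
  ∑ x, ∑ y, q₁ x * q₂ y * log (q₁ x * q₂ y / p (x, y))

variable [Nonempty X]

lemma sum_gibbsWeight_pos : 0 < ∑ x, gibbsWeight p q₂ x :=
  sum_pos (fun x _ => gibbsWeight_pos p q₂ x) univ_nonempty

lemma meanFieldFactor_pos (x : X) : 0 < meanFieldFactor p q₂ x :=
  div_pos (gibbsWeight_pos p q₂ x) (sum_gibbsWeight_pos p q₂)

lemma sum_meanFieldFactor : ∑ x, meanFieldFactor p q₂ x = 1 := by
  simp only [meanFieldFactor, ← sum_div]
  exact div_self (sum_gibbsWeight_pos p q₂).ne'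

lemma freeEnergy_eq_sum_mul_log_div_add (hp : ∀ z, p z ≠ 0) (hq₂ : ∑ y, q₂ y = 1)
    {q₁ : X → ℝ} (hq₁ : ∑ x, q₁ x = 1) :
    freeEnergy p q₂ q₁
      = ∑ x, q₁ x * log (q₁ x / meanFieldFactor p q₂ x)
        + (∑ y, q₂ y * log (q₂ y) - log (∑ x', gibbsWeight p q₂ x')) := by
  set H := ∑ y, q₂ y * log (q₂ y)
  set Z := ∑ x', gibbsWeight p q₂ x'
  have hrow : ∀ x, ∑ y, q₁ x * q₂ y * log (q₁ x * q₂ y / p (x, y))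
      = q₁ x * log (q₁ x / meanFieldFactor p q₂ x) + q₁ x * (H - log Z) := by
    intro x
    rw [sum_mul_mul_log_mul_div _ _ _ (fun y => hp (x, y)) hq₂, ← log_gibbsWeight]
    rcases eq_or_ne (q₁ x) 0 with h | h
    · simp [h]
    rw [log_div h (meanFieldFactor_pos p q₂ x).ne', meanFieldFactor,
      log_div (gibbsWeight_pos p q₂ x).ne' (sum_gibbsWeight_pos p q₂).ne']
    ring
  rw [freeEnergy, sum_congr rfl fun x _ => hrow x, sum_add_distrib, ← sum_mul, hq₁, one_mul]

end MeanField

theorem stmt6_general {X Y : Type*} [Fintype X] [Fintype Y] [Nonempty X]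
    (p : X × Y → ℝ) (hp : ∀ z, 0 < p z)
    (q₂ : Y → ℝ) (hq₂1 : ∑ y, q₂ y = 1) :
    ∀ g : X → ℝ, (∀ x, g x = Real.exp (∑ y, q₂ y * Real.log (p (x, y)))) →
    ∀ q₁s : X → ℝ, (∀ x, q₁s x = g x / ∑ x', g x') →
      ((∀ q₁ : X → ℝ, (∀ x, 0 ≤ q₁ x) → ∑ x, q₁ x = 1 →
          ∑ x, ∑ y, q₁ x * q₂ y * Real.log (q₁ x * q₂ y / p (x, y))
            = (∑ x, q₁ x * Real.log (q₁ x / q₁s x))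
              + ((∑ y, q₂ y * Real.log (q₂ y)) - Real.log (∑ x', g x'))) ∧
        (∀ x, 0 ≤ q₁s x) ∧ (∑ x, q₁s x = 1) ∧
        (∀ q₁ : X → ℝ, (∀ x, 0 ≤ q₁ x) → ∑ x, q₁ x = 1 →
          ∑ x, ∑ y, q₁s x * q₂ y * Real.log (q₁s x * q₂ y / p (x, y))
            ≤ ∑ x, ∑ y, q₁ x * q₂ y * Real.log (q₁ x * q₂ y / p (x, y))) ∧
        (∀ q₁ : X → ℝ, (∀ x, 0 ≤ q₁ x) → ∑ x, q₁ x = 1 →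
          (∑ x, ∑ y, q₁ x * q₂ y * Real.log (q₁ x * q₂ y / p (x, y))
            = ∑ x, ∑ y, q₁s x * q₂ y * Real.log (q₁s x * q₂ y / p (x, y))) →
          q₁ = q₁s)) := by
  intro g hg q₁s hq₁s
  obtain rfl : g = gibbsWeight p q₂ := funext hg
  obtain rfl : q₁s = meanFieldFactor p q₂ := funext hq₁s
  have hpos := meanFieldFactor_pos p q₂
  have hsum := sum_meanFieldFactor p q₂
  have hdecomp := fun q₁ : X → ℝ =>
    freeEnergy_eq_sum_mul_log_div_add p q₂ (fun z => (hp z).ne') hq₂1 (q₁ := q₁)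
  have hself : ∑ x, meanFieldFactor p q₂ x
      * log (meanFieldFactor p q₂ x / meanFieldFactor p q₂ x) = 0 :=
    (sum_mul_log_div_eq_zero_iff (fun x => (hpos x).le) hpos rfl).mpr rfl
  refine ⟨fun q₁ _ hq₁ => hdecomp q₁ hq₁, fun x => (hpos x).le, hsum, ?_, ?_⟩
  · intro q₁ hq₁0 hq₁1
    change freeEnergy p q₂ _ ≤ freeEnergy p q₂ q₁
    rw [hdecomp _ hsum, hdecomp q₁ hq₁1, hself]
    linarith [sum_mul_log_div_nonneg hq₁0 hpos (hq₁1.trans hsum.symm)]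
  · intro q₁ hq₁0 hq₁1 heq
    change freeEnergy p q₂ q₁ = freeEnergy p q₂ _ at heq
    rw [hdecomp _ hsum, hdecomp q₁ hq₁1, hself, add_left_inj] at heq
    exact (sum_mul_log_div_eq_zero_iff hq₁0 hpos (hq₁1.trans hsum.symm)).mp heq

/-- **Mean-field VBI optimality (finite spaces).** With `p : X×Y → (0,∞)` and a pmf `q₂`
on `Y`, let `g(x) = exp(Σ_y q₂(y)·ln p(x,y))` and `q₁*(x) = g(x)/Σ_{x'} g(x')`. Then for
every pmf `q₁` on `X`,
`Σ_{x,y} q₁(x)q₂(y)·ln(q₁(x)q₂(y)/p(x,y)) = Σ_x q₁(x)·ln(q₁(x)/q₁*(x)) + C` with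
`C = Σ_y q₂(y)·ln q₂(y) − ln(Σ_{x'} g(x'))`, and consequently `q₁*` is the unique pmf
minimizing the left-hand side. -/
theorem stmt6 {X Y : Type*} [Fintype X] [Fintype Y] [Nonempty X] [Nonempty Y]
    (p : X × Y → ℝ) (hp : ∀ z, 0 < p z)
    (q₂ : Y → ℝ) (hq₂0 : ∀ y, 0 ≤ q₂ y) (hq₂1 : ∑ y, q₂ y = 1) :
    ∀ g : X → ℝ, (∀ x, g x = Real.exp (∑ y, q₂ y * Real.log (p (x, y)))) →
    ∀ q₁s : X → ℝ, (∀ x, q₁s x = g x / ∑ x', g x') →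
      ((∀ q₁ : X → ℝ, (∀ x, 0 ≤ q₁ x) → ∑ x, q₁ x = 1 →
          ∑ x, ∑ y, q₁ x * q₂ y * Real.log (q₁ x * q₂ y / p (x, y))
            = (∑ x, q₁ x * Real.log (q₁ x / q₁s x))
              + ((∑ y, q₂ y * Real.log (q₂ y)) - Real.log (∑ x', g x'))) ∧
        (∀ x, 0 ≤ q₁s x) ∧ (∑ x, q₁s x = 1) ∧
        (∀ q₁ : X → ℝ, (∀ x, 0 ≤ q₁ x) → ∑ x, q₁ x = 1 →
          ∑ x, ∑ y, q₁s x * q₂ y * Real.log (q₁s x * q₂ y / p (x, y))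
            ≤ ∑ x, ∑ y, q₁ x * q₂ y * Real.log (q₁ x * q₂ y / p (x, y))) ∧
        (∀ q₁ : X → ℝ, (∀ x, 0 ≤ q₁ x) → ∑ x, q₁ x = 1 →
          (∑ x, ∑ y, q₁ x * q₂ y * Real.log (q₁ x * q₂ y / p (x, y))
            = ∑ x, ∑ y, q₁s x * q₂ y * Real.log (q₁s x * q₂ y / p (x, y))) →
          q₁ = q₁s)) :=
  stmt6_general p hp q₂ hq₂1
end

section
/- Let (Ω, 𝔽, P) be a probability space. Let x : Ω → ℂ^N be a random vector whose entries and pairwise products of entries are integrable, with mean μ_x and central second moments Σ_x (Σ_{x,mn} = E[(x_m − μ_{x,m})·conj(x_n − μ_{x,n})]). For j = 1,…,B let θʲ : Ω → ℝ^N be random vectors whose entries and pairwise products of entries are integrable, with means μ̂ʲ and covariance matrices Σʲ, such that x, θ¹, …, θᴮ are mutually independent. Let F₀ and A¹,…,Aᴮ be M×N complex matrices, y ∈ ℂ^M, and define the random matrix F̄ = F₀ + Σ_{j=1}^{B} Aʲ·diag(θʲ − μ̂ʲ) and the matrix H = F₀ᴴF₀ + Σ_{j=1}^{B} (AʲᴴAʲ)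 ⊙ Σʲ. Then E[‖y − F̄x‖²] = ‖y‖² − 2·Re{μ_xᴴF₀ᴴy} + μ_xᴴHμ_x + Tr(HΣ_x). -/
/-!
Write `F̄ = F₀ + ∑ⱼ Aʲ diag(dʲ)` with the centred deviations `dʲ = θʲ - μ̂ʲ`. Pointwise,
`‖y - F̄x‖² = ‖y‖² - 2 Re tr(F̄ x yᴴ) + tr(F̄ᴴF̄ x xᴴ)`. Since `F̄` is a function of `θ` and `x` is
independent of `θ`, the expectation of each trace factors as `tr(E[F̄] E[x yᴴ])` and
`tr(E[F̄ᴴF̄] E[x xᴴ])`. The deviations have mean zero, are uncorrelated for different `j` (by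
independence) and have covariance `Σʲ` for equal `j`; hence `E[F̄] = F₀` and `E[F̄ᴴF̄] = H`, while
`E[x xᴴ] = Σ_x + μ_x μ_xᴴ`.
-/

open Matrix MeasureTheory ProbabilityTheory

section Algebra
variable {m n : Type*} [Fintype m] [Fintype n]

lemma trace_mul_vecMulVec (K : Matrix m n ℂ) (u : n → ℂ) (w : m → ℂ) :
    trace (K * vecMulVec u w) = w ⬝ᵥ (K *ᵥ u) := by
  rw [mul_vecMulVec, trace_vecMulVec, dotProduct_comm]

lemma ofReal_sum_norm_sq_sub_mulVec (y : m → ℂ) (G : Matrix m n ℂ) (v : n → ℂ) :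
    ((∑ i, ‖(y - G *ᵥ v) i‖ ^ 2 : ℝ) : ℂ) = ((∑ i, ‖y i‖ ^ 2 : ℝ) : ℂ)
      - (trace (G * vecMulVec v (star y)) + (starRingEnd ℂ) (trace (G * vecMulVec v (star y))))
      + trace ((Gᴴ * G) * vecMulVec v (star v)) := by
  have hnorm : ∀ w : m → ℂ, ((∑ i, ‖w i‖ ^ 2 : ℝ) : ℂ) = star w ⬝ᵥ w := fun w => by
    push_cast
    simp [dotProduct, Complex.mul_conj', mul_comm]
  rw [trace_mul_vecMulVec, trace_mul_vecMulVec, hnorm, hnorm, ← mulVec_mulVec,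
    dotProduct_mulVec (star v), ← star_mulVec, star_sub, sub_dotProduct, dotProduct_sub,
    dotProduct_sub, star_dotProduct (G *ᵥ v)]
  simp only [Complex.star_def]
  ring

lemma star_dotProduct_conjTranspose_mulVec (K : Matrix m n ℂ) (u : n → ℂ) (w : m → ℂ) :
    star u ⬝ᵥ (Kᴴ *ᵥ w) = star (star w ⬝ᵥ (K *ᵥ u)) := by
  rw [star_dotProduct, star_mulVec, conjTranspose_conjTranspose, dotProduct_mulVec]

lemma trace_mul_add_vecMulVec (H S : Matrix n n ℂ) (u : n → ℂ) :
    trace (H * (S + vecMulVec u (star u))) = star u ⬝ᵥ (H *ᵥ u) + trace (H * S) := by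
  rw [mul_add, trace_add, trace_mul_vecMulVec, add_comm]

end Algebra

lemma MeasureTheory.Integrable.conj {Ω : Type*} {mΩ : MeasurableSpace Ω} {μ : Measure Ω}
    {f : Ω → ℂ} (hf : Integrable f μ) : Integrable (fun ω => (starRingEnd ℂ) (f ω)) μ :=
  Complex.conjLIE.integrable_comp_iff.2 hf

section Moments
variable {Ω 𝕜 : Type*} [RCLike 𝕜] {mΩ : MeasurableSpace Ω} {μ : Measure Ω}
  [IsProbabilityMeasure μ] {X Y : Ω → 𝕜}

lemma integral_sub_integral_eq_zero (hX : Integrable X μ) :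
    ∫ ω, (X ω - ∫ ω', X ω' ∂μ) ∂μ = 0 := by
  rw [integral_sub hX (integrable_const _), integral_const, probReal_univ, one_smul, sub_self]

lemma integral_mul_eq_integral_sub_mul_sub_add (hX : Integrable X μ) (hY : Integrable Y μ)
    (hXY : Integrable (fun ω => X ω * Y ω) μ) :
    ∫ ω, X ω * Y ω ∂μ = ∫ ω, (X ω - ∫ ω', X ω' ∂μ) * (Y ω - ∫ ω', Y ω' ∂μ) ∂μ
      + (∫ ω, X ω ∂μ) * ∫ ω, Y ω ∂μ := by
  set a := ∫ ω, X ω ∂μ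
  set b := ∫ ω, Y ω ∂μ
  have h : (fun ω => (X ω - a) * (Y ω - b))
      = fun ω => X ω * Y ω - b * X ω - a * Y ω + a * b := by
    funext ω; ring
  rw [h, integral_add, integral_sub, integral_sub hXY (hX.const_mul b), integral_const_mul,
    integral_const_mul, integral_const, probReal_univ, one_smul]
  · ring
  all_goals fun_prop

lemma ProbabilityTheory.IndepFun.integral_sub_mul_sub_eq_zero (h : IndepFun X Y μ)
    (hX : Integrable X μ) (hY : Integrable Y μ) :
    ∫ ω, (X ω - ∫ ω', X ω' ∂μ) * (Y ω - ∫ ω', Y ω' ∂μ) ∂μ = 0 := by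
  have hc := h.comp (φ := fun x => x - ∫ ω', X ω' ∂μ) (ψ := fun y => y - ∫ ω', Y ω' ∂μ)
    (by fun_prop) (by fun_prop)
  have := hc.integral_fun_mul_eq_mul_integral (hX.sub (integrable_const _)).1
    (hY.sub (integrable_const _)).1
  simp only [Function.comp_def] at this
  rw [this, integral_sub_integral_eq_zero hX, zero_mul]

variable {ι κ : Type*} [Fintype ι] [Fintype κ] {ξ : ι → Ω → 𝕜} {η : κ → Ω → 𝕜}

lemma memLp_const_add_sum_mul (c : 𝕜) (u : ι → 𝕜) (hξ : ∀ k, MemLp (ξ k) 2 μ) :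
    MemLp (fun ω => c + ∑ k, u k * ξ k ω) 2 μ :=
  (memLp_const c).add (memLp_finsetSum _ fun k _ => (hξ k).const_mul (u k))

lemma integral_const_add_sum_mul (c : 𝕜) (u : ι → 𝕜) (hξ : ∀ k, MemLp (ξ k) 2 μ)
    (hξ0 : ∀ k, ∫ ω, ξ k ω ∂μ = 0) :
    ∫ ω, c + ∑ k, u k * ξ k ω ∂μ = c := by
  have hξi : ∀ k, Integrable (ξ k) μ := fun k => (hξ k).integrable one_le_two
  rw [integral_add (integrable_const c) (by fun_prop), integral_finsetSum _ fun k _ => by fun_prop]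
  simp [integral_const_mul, hξ0]

lemma integral_const_add_sum_mul_mul_const_add_sum_mul (c c' : 𝕜) (u : ι → 𝕜) (u' : κ → 𝕜)
    (hξ : ∀ k, MemLp (ξ k) 2 μ) (hη : ∀ l, MemLp (η l) 2 μ)
    (hξ0 : ∀ k, ∫ ω, ξ k ω ∂μ = 0) (hη0 : ∀ l, ∫ ω, η l ω ∂μ = 0) :
    ∫ ω, (c + ∑ k, u k * ξ k ω) * (c' + ∑ l, u' l * η l ω) ∂μ
      = c * c' + ∑ k, ∑ l, u k * u' l * ∫ ω, ξ k ω * η l ω ∂μ := by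
  have hX := memLp_const_add_sum_mul c u hξ (μ := μ)
  have hY := memLp_const_add_sum_mul c' u' hη (μ := μ)
  have hξη : ∀ k l, Integrable (fun ω => ξ k ω * η l ω) μ := fun k l =>
    (hξ k).integrable_mul (hη l)
  have hprod : ∀ ω, (∑ k, u k * ξ k ω) * ∑ l, u' l * η l ω
      = ∑ k, ∑ l, u k * u' l * (ξ k ω * η l ω) := fun ω => by
    rw [Finset.sum_mul_sum]
    exact Finset.sum_congr rfl fun k _ => Finset.sum_congr rfl fun l _ => by ring
  rw [integral_mul_eq_integral_sub_mul_sub_add (hX.integrable one_le_two)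
    (hY.integrable one_le_two) (hX.integrable_mul hY), integral_const_add_sum_mul c u hξ hξ0,
    integral_const_add_sum_mul c' u' hη hη0]
  simp only [add_sub_cancel_left, hprod]
  rw [add_comm, integral_finsetSum _ fun k _ => by fun_prop]
  congr 1
  refine Finset.sum_congr rfl fun k _ => ?_
  rw [integral_finsetSum _ fun l _ => by fun_prop]
  simp only [integral_const_mul]

end Moments

lemma ProbabilityTheory.iIndepFun.integral_sub_mul_sub_eq_ite {Ω ι n : Type*}
    {mΩ : MeasurableSpace Ω} {μ : Measure Ω} [IsProbabilityMeasure μ] [DecidableEq ι]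
    {θ : ι → Ω → n → ℝ} {mθ : ι → n → ℝ} {S : ι → Matrix n n ℝ} (h : iIndepFun θ μ)
    (hθ : ∀ j a, Integrable (fun ω => θ j ω a) μ) (hmean : ∀ j a, ∫ ω, θ j ω a ∂μ = mθ j a)
    (hcov : ∀ j a b, ∫ ω, (θ j ω a - mθ j a) * (θ j ω b - mθ j b) ∂μ = S j a b)
    (j j' : ι) (a b : n) :
    ∫ ω, (θ j ω a - mθ j a) * (θ j' ω b - mθ j' b) ∂μ = if j = j' then S j a b else 0 := by
  split_ifs with hjj'
  · subst hjj'
    exact hcov j a b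
  · simpa [hmean] using ((h.indepFun hjj').comp (measurable_pi_apply a)
      (measurable_pi_apply b)).integral_sub_mul_sub_eq_zero (hθ j a) (hθ j' b)

/-- Entrywise expectation of a random matrix (`Matrix` has no global norm, hence no Bochner
integral). -/
noncomputable def entrywiseIntegral {Ω : Type*} {mΩ : MeasurableSpace Ω} {m n : Type*}
    (M : Ω → Matrix m n ℂ) (μ : Measure Ω) : Matrix m n ℂ :=
  of fun i j => ∫ ω, M ω i j ∂μ

section EntrywiseIntegral
variable {Ω n : Type*} {mΩ : MeasurableSpace Ω} {μ : Measure Ω} {x : Ω → n → ℂ}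

lemma entrywiseIntegral_vecMulVec_const {m : Type*} (w : m → ℂ) :
    entrywiseIntegral (fun ω => vecMulVec (x ω) w) μ
      = vecMulVec (fun a => ∫ ω, x ω a ∂μ) w := by
  ext a i
  simp only [entrywiseIntegral, of_apply, vecMulVec_apply, integral_mul_const]

lemma entrywiseIntegral_vecMulVec_star_self [IsProbabilityMeasure μ] {mx : n → ℂ}
    {Sx : Matrix n n ℂ} (hx : ∀ a, Integrable (fun ω => x ω a) μ)
    (hxx : ∀ a b, Integrable (fun ω => x ω a * (starRingEnd ℂ) (x ω b)) μ)
    (hmean : ∀ a, ∫ ω, x ω a ∂μ = mx a)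
    (hcov : ∀ a b, ∫ ω, (x ω a - mx a) * (starRingEnd ℂ) (x ω b - mx b) ∂μ = Sx a b) :
    entrywiseIntegral (fun ω => vecMulVec (x ω) (star (x ω))) μ
      = Sx + vecMulVec mx (star mx) := by
  ext a b
  simp only [entrywiseIntegral, of_apply, vecMulVec_apply, Pi.star_apply, Complex.star_def,
    Matrix.add_apply]
  rw [integral_mul_eq_integral_sub_mul_sub_add (hx a) (hx b).conj (hxx a b), integral_conj,
    hmean, hmean]
  simp only [← map_sub, hcov]

end EntrywiseIntegral

namespace ProbabilityTheory
variable {Ω α β : Type*} {mΩ : MeasurableSpace Ω} [MeasurableSpace α] [MeasurableSpace β]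
  {μ : Measure Ω} {m n : Type*} {X : Ω → α} {Y : Ω → β}
  {P : α → Matrix m n ℂ} {Q : β → Matrix n m ℂ}

lemma IndepFun.integrable_apply_mul_apply (h : IndepFun X Y μ)
    (hP : ∀ i j, Measurable fun a => P a i j) (hQ : ∀ j i, Measurable fun b => Q b j i)
    (hPi : ∀ i j, Integrable (fun ω => P (X ω) i j) μ)
    (hQi : ∀ j i, Integrable (fun ω => Q (Y ω) j i) μ) (i : m) (j : n) :
    Integrable (fun ω => P (X ω) i j * Q (Y ω) j i) μ :=
  (h.comp (hP i j) (hQ j i)).integrable_mul (hPi i j) (hQi j i)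

variable [Fintype m] [Fintype n]

lemma IndepFun.integrable_trace_mul (h : IndepFun X Y μ)
    (hP : ∀ i j, Measurable fun a => P a i j) (hQ : ∀ j i, Measurable fun b => Q b j i)
    (hPi : ∀ i j, Integrable (fun ω => P (X ω) i j) μ)
    (hQi : ∀ j i, Integrable (fun ω => Q (Y ω) j i) μ) :
    Integrable (fun ω => trace (P (X ω) * Q (Y ω))) μ := by
  have := h.integrable_apply_mul_apply hP hQ hPi hQi
  simp only [trace, diag, mul_apply]
  fun_prop

lemma IndepFun.integral_trace_mul (h : IndepFun X Y μ)
    (hP : ∀ i j, Measurable fun a => P a i j) (hQ : ∀ j i, Measurable fun b => Q b j i)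
    (hPi : ∀ i j, Integrable (fun ω => P (X ω) i j) μ)
    (hQi : ∀ j i, Integrable (fun ω => Q (Y ω) j i) μ) :
    ∫ ω, trace (P (X ω) * Q (Y ω)) ∂μ
      = trace (entrywiseIntegral (fun ω => P (X ω)) μ * entrywiseIntegral (fun ω => Q (Y ω)) μ) := by
  have hint := h.integrable_apply_mul_apply hP hQ hPi hQi
  simp only [trace, diag, mul_apply, entrywiseIntegral, of_apply]
  rw [integral_finsetSum _ fun i _ => by fun_prop]
  refine Finset.sum_congr rfl fun i _ => ?_
  rw [integral_finsetSum _ fun j _ => hint i j]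
  exact Finset.sum_congr rfl fun j _ =>
    (h.comp (hP i j) (hQ j i)).integral_fun_mul_eq_mul_integral (hPi i j).1 (hQi j i).1

end ProbabilityTheory

section Linearized
variable {ι m n : Type*} [Fintype ι] [Fintype n] [DecidableEq n]

/-- The paper's `F̄` is this matrix at `t = θ - μ̂`. -/
noncomputable def linearizedMatrix (F₀ : Matrix m n ℂ) (A : ι → Matrix m n ℂ) (t : ι → n → ℝ) :
    Matrix m n ℂ :=
  F₀ + ∑ j, A j * diagonal fun i => (t j i : ℂ)

variable (F₀ : Matrix m n ℂ) (A : ι → Matrix m n ℂ)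

lemma linearizedMatrix_apply (t : ι → n → ℝ) (i : m) (b : n) :
    linearizedMatrix F₀ A t i b = F₀ i b + ∑ j, A j i b * t j b := by
  simp [linearizedMatrix, Matrix.sum_apply]

lemma star_linearizedMatrix_apply (t : ι → n → ℝ) (i : m) (b : n) :
    star (linearizedMatrix F₀ A t i b) = star (F₀ i b) + ∑ j, star (A j i b) * t j b := by
  simp [linearizedMatrix_apply, mul_comm]

lemma continuous_linearizedMatrix : Continuous (linearizedMatrix F₀ A) := by
  unfold linearizedMatrix
  fun_prop

lemma measurable_linearizedMatrix_apply (i : m) (b : n) :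
    Measurable fun t => linearizedMatrix F₀ A t i b :=
  ((continuous_linearizedMatrix F₀ A).matrix_elem i b).measurable

lemma measurable_conjTranspose_mul_linearizedMatrix_apply [Fintype m] (a b : n) :
    Measurable fun t => ((linearizedMatrix F₀ A t)ᴴ * linearizedMatrix F₀ A t) a b :=
  have hL := continuous_linearizedMatrix F₀ A
  ((hL.matrix_conjTranspose.matrix_mul hL).matrix_elem a b).measurable

variable {Ω : Type*} {mΩ : MeasurableSpace Ω} {μ : Measure Ω} [IsProbabilityMeasure μ]
  {d : Ω → ι → n → ℝ}

lemma entrywiseIntegral_linearizedMatrix (hd : ∀ j b, Integrable (fun ω => d ω j b) μ)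
    (hd0 : ∀ j b, ∫ ω, d ω j b ∂μ = 0) :
    entrywiseIntegral (fun ω => linearizedMatrix F₀ A (d ω)) μ = F₀ := by
  have hdc : ∀ j b, Integrable (fun ω => (d ω j b : ℂ)) μ := fun j b => (hd j b).ofReal
  ext i b
  simp only [entrywiseIntegral, of_apply, linearizedMatrix_apply]
  rw [integral_add (integrable_const _) (by fun_prop), integral_finsetSum _ fun j _ => by fun_prop]
  simp [integral_const_mul, integral_complex_ofReal, hd0]

lemma memLp_linearizedMatrix_apply (hd : ∀ j b, MemLp (fun ω => d ω j b) 2 μ) (i : m) (b : n) :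
    MemLp (fun ω => linearizedMatrix F₀ A (d ω) i b) 2 μ := by
  simp only [linearizedMatrix_apply]
  exact memLp_const_add_sum_mul _ _ fun j => (hd j b).ofReal

lemma integrable_star_linearizedMatrix_apply_mul_apply
    (hd : ∀ j b, MemLp (fun ω => d ω j b) 2 μ) (i : m) (a b : n) :
    Integrable
      (fun ω => star (linearizedMatrix F₀ A (d ω) i a) * linearizedMatrix F₀ A (d ω) i b) μ :=
  (memLp_linearizedMatrix_apply F₀ A hd i a).star.integrable_mul
    (memLp_linearizedMatrix_apply F₀ A hd i b)

lemma integrable_conjTranspose_mul_linearizedMatrix_apply [Fintype m]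
    (hd : ∀ j b, MemLp (fun ω => d ω j b) 2 μ) (a b : n) :
    Integrable
      (fun ω => ((linearizedMatrix F₀ A (d ω))ᴴ * linearizedMatrix F₀ A (d ω)) a b) μ := by
  have := integrable_star_linearizedMatrix_apply_mul_apply F₀ A hd
  simp only [mul_apply, conjTranspose_apply]
  fun_prop

variable [DecidableEq ι] {S : ι → Matrix n n ℝ}

lemma integral_star_linearizedMatrix_apply_mul_apply
    (hd : ∀ j b, MemLp (fun ω => d ω j b) 2 μ) (hd0 : ∀ j b, ∫ ω, d ω j b ∂μ = 0)
    (hcorr : ∀ j j' a b, ∫ ω, d ω j a * d ω j' b ∂μ = if j = j' then S j a b else 0)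
    (i : m) (a b : n) :
    ∫ ω, star (linearizedMatrix F₀ A (d ω) i a) * linearizedMatrix F₀ A (d ω) i b ∂μ
      = star (F₀ i a) * F₀ i b + ∑ j, star (A j i a) * A j i b * S j a b := by
  have hdc : ∀ j b, MemLp (fun ω => (d ω j b : ℂ)) 2 μ := fun j b => (hd j b).ofReal
  have hdc0 : ∀ j b, ∫ ω, (d ω j b : ℂ) ∂μ = 0 := fun j b => by
    rw [integral_complex_ofReal, hd0, Complex.ofReal_zero]
  simp only [star_linearizedMatrix_apply]
  simp only [linearizedMatrix_apply]
  rw [integral_const_add_sum_mul_mul_const_add_sum_mul _ _ _ _ (fun j => hdc j a)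
    (fun j => hdc j b) (fun j => hdc0 j a) (fun j => hdc0 j b)]
  simp only [← Complex.ofReal_mul, integral_complex_ofReal, hcorr]
  simp [apply_ite (Complex.ofReal), mul_ite]

lemma entrywiseIntegral_conjTranspose_mul_linearizedMatrix [Fintype m]
    (hd : ∀ j b, MemLp (fun ω => d ω j b) 2 μ) (hd0 : ∀ j b, ∫ ω, d ω j b ∂μ = 0)
    (hcorr : ∀ j j' a b, ∫ ω, d ω j a * d ω j' b ∂μ = if j = j' then S j a b else 0) :
    entrywiseIntegral (fun ω => (linearizedMatrix F₀ A (d ω))ᴴ * linearizedMatrix F₀ A (d ω)) μ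
      = F₀ᴴ * F₀ + ∑ j, ((A j)ᴴ * A j).hadamard ((S j).map fun r => (r : ℂ)) := by
  ext a b
  simp only [entrywiseIntegral, of_apply, mul_apply, conjTranspose_apply]
  rw [integral_finsetSum _ fun i _ =>
    integrable_star_linearizedMatrix_apply_mul_apply F₀ A hd i a b]
  simp only [integral_star_linearizedMatrix_apply_mul_apply F₀ A hd hd0 hcorr]
  simp only [RCLike.star_def, Finset.sum_add_distrib, Matrix.add_apply, mul_apply,
    conjTranspose_apply, Matrix.sum_apply, hadamard_apply, map_apply, Finset.sum_mul,
    add_right_inj]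
  exact Finset.sum_comm

lemma integral_norm_sq_sub_linearizedMatrix_mulVec [Fintype m] {v : Ω → n → ℂ}
    (hind : IndepFun d v μ) (hd : ∀ j b, MemLp (fun ω => d ω j b) 2 μ)
    (hd0 : ∀ j b, ∫ ω, d ω j b ∂μ = 0)
    (hcorr : ∀ j j' a b, ∫ ω, d ω j a * d ω j' b ∂μ = if j = j' then S j a b else 0)
    (hv : ∀ b, Integrable (fun ω => v ω b) μ)
    (hvv : ∀ a b, Integrable (fun ω => v ω a * (starRingEnd ℂ) (v ω b)) μ) (y : m → ℂ) :
    ∫ ω, ((∑ i, ‖(y - linearizedMatrix F₀ A (d ω) *ᵥ v ω) i‖ ^ 2 : ℝ) : ℂ) ∂μ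
      = ((∑ i, ‖y i‖ ^ 2 : ℝ) : ℂ)
        - 2 * ((star y ⬝ᵥ (F₀ *ᵥ fun b => ∫ ω, v ω b ∂μ)).re : ℂ)
        + trace ((F₀ᴴ * F₀ + ∑ j, ((A j)ᴴ * A j).hadamard ((S j).map fun r => (r : ℂ)))
          * entrywiseIntegral (fun ω => vecMulVec (v ω) (star (v ω))) μ) := by
  have hQy : ∀ b i, Measurable fun u : n → ℂ => vecMulVec u (star y) b i := fun b i => by
    simp only [vecMulVec_apply]; fun_prop
  have hQv : ∀ b a, Measurable fun u : n → ℂ => vecMulVec u (star u) b a := fun b a => by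
    simp only [vecMulVec_apply]; fun_prop
  have hLi : ∀ i b, Integrable (fun ω => linearizedMatrix F₀ A (d ω) i b) μ := fun i b =>
    (memLp_linearizedMatrix_apply F₀ A hd i b).integrable one_le_two
  have hQyi : ∀ b i, Integrable (fun ω => vecMulVec (v ω) (star y) b i) μ := fun b i =>
    (hv b).mul_const _
  have hLLi := integrable_conjTranspose_mul_linearizedMatrix_apply F₀ A hd
  have hlin := hind.integrable_trace_mul (measurable_linearizedMatrix_apply F₀ A) hQy hLi hQyi
  have hlin' := hlin.conj
  have hquad := hind.integrable_trace_mul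
    (measurable_conjTranspose_mul_linearizedMatrix_apply F₀ A) hQv hLLi hvv
  simp only [ofReal_sum_norm_sq_sub_mulVec]
  rw [integral_add (by fun_prop) hquad, integral_sub (by fun_prop) (by fun_prop), integral_const,
    probReal_univ, one_smul, integral_add hlin hlin', integral_conj,
    hind.integral_trace_mul (measurable_linearizedMatrix_apply F₀ A) hQy hLi hQyi,
    hind.integral_trace_mul (measurable_conjTranspose_mul_linearizedMatrix_apply F₀ A) hQv hLLi hvv,
    entrywiseIntegral_linearizedMatrix F₀ A (fun j b => (hd j b).integrable one_le_two) hd0,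
    entrywiseIntegral_conjTranspose_mul_linearizedMatrix F₀ A hd hd0 hcorr,
    entrywiseIntegral_vecMulVec_const, trace_mul_vecMulVec, Complex.add_conj, Complex.ofReal_mul,
    Complex.ofReal_ofNat]

end Linearized

/-- **Expected residual energy under the linearized model (eq. (33)).** With `x : Ω → ℂ^N`
(mean `μ_x`, central second moments `Σ_x`) and mutually independent real random vectors
`θʲ` (means `μ̂ʲ`, covariances `Σʲ`), all mutually independent of `x`, and
`F̄ = F₀ + Σⱼ Aʲ·diag(θʲ − μ̂ʲ)`, `H = F₀ᴴF₀ + Σⱼ (AʲᴴAʲ) ⊙ Σʲ`, one has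
`E[‖y − F̄x‖²] = ‖y‖² − 2·Re{μ_xᴴF₀ᴴy} + μ_xᴴHμ_x + Tr(HΣ_x)`. -/
theorem stmt15 {Ω : Type*} [MeasureSpace Ω]
    [IsProbabilityMeasure (volume : Measure Ω)] {B M N : ℕ}
    (x : Ω → Fin N → ℂ) (θ : Fin B → Ω → Fin N → ℝ)
    (hintx1 : ∀ n, Integrable (fun ω => x ω n))
    (hintx2 : ∀ m n, Integrable (fun ω => x ω m * (starRingEnd ℂ) (x ω n)))
    (hintθ1 : ∀ j i, Integrable (fun ω => θ j ω i))
    (hintθ2 : ∀ j j' i i', Integrable (fun ω => θ j ω i * θ j' ω i'))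
    (hindθ : iIndepFun θ volume)
    (hindx : IndepFun x (fun ω j => θ j ω) volume)
    (μx : Fin N → ℂ) (hmeanx : ∀ n, (∫ ω, x ω n) = μx n)
    (Sigx : Matrix (Fin N) (Fin N) ℂ)
    (hcovx : ∀ m n, (∫ ω, (x ω m - μx m) * (starRingEnd ℂ) (x ω n - μx n)) = Sigx m n)
    (μhat : Fin B → Fin N → ℝ) (hmeanθ : ∀ j i, (∫ ω, θ j ω i) = μhat j i)
    (Sigθ : Fin B → Matrix (Fin N) (Fin N) ℝ)
    (hcovθ : ∀ j m n, (∫ ω, (θ j ω m - μhat j m) * (θ j ω n - μhat j n)) = Sigθ j m n)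
    (F₀ : Matrix (Fin M) (Fin N) ℂ) (A : Fin B → Matrix (Fin M) (Fin N) ℂ)
    (y : Fin M → ℂ) :
    ∀ Fbar : Ω → Matrix (Fin M) (Fin N) ℂ,
      (∀ ω, Fbar ω = F₀ + ∑ j, A j *
          Matrix.diagonal (fun i => ((θ j ω i - μhat j i : ℝ) : ℂ))) →
      ∀ Hm : Matrix (Fin N) (Fin N) ℂ,
        Hm = F₀ᴴ * F₀ + ∑ j, ((A j)ᴴ * A j).hadamard
            ((Sigθ j).map (fun r => (r : ℂ))) →
        ((∫ ω, ∑ i, ‖(y - Fbar ω *ᵥ x ω) i‖ ^ 2 : ℝ) : ℂ)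
          = ((∑ i, ‖y i‖ ^ 2 : ℝ) : ℂ)
            - 2 * (((star μx ⬝ᵥ (F₀ᴴ *ᵥ y)).re : ℝ) : ℂ)
            + star μx ⬝ᵥ (Hm *ᵥ μx) + Matrix.trace (Hm * Sigx) := by
  intro Fbar hFbar Hm hHm
  set d : Ω → Fin B → Fin N → ℝ := fun ω j i => θ j ω i - μhat j i
  have hd2 : ∀ j i, MemLp (fun ω => d ω j i) 2 := fun j i =>
    ((memLp_two_iff_integrable_sq (hintθ1 j i).1).2 (by simpa [sq] using hintθ2 j j i i)).sub
      (memLp_const _)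
  have hd0 : ∀ j i, ∫ ω, d ω j i = 0 := fun j i => by
    simpa [hmeanθ] using integral_sub_integral_eq_zero (hintθ1 j i)
  have hind : IndepFun d x := (hindx.comp measurable_id
    (by fun_prop : Measurable fun (t : Fin B → Fin N → ℝ) j i => t j i - μhat j i)).symm
  rw [← integral_complex_ofReal, show Fbar = fun ω => linearizedMatrix F₀ A (d ω) from funext hFbar,
    integral_norm_sq_sub_linearizedMatrix_mulVec F₀ A hind hd2 hd0
      (hindθ.integral_sub_mul_sub_eq_ite hintθ1 hmeanθ hcovθ) hintx1 hintx2,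
    ← hHm, funext hmeanx, entrywiseIntegral_vecMulVec_star_self hintx1 hintx2 hmeanx hcovx,
    trace_mul_add_vecMulVec, star_dotProduct_conjTranspose_mulVec, Complex.star_def,
    Complex.conj_re]
  ring
end
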